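/- Let K be a field, n ≥ 1, d ≥ 1. The kernel in degree 2 of the K-algebra map K[z_I : I ∈ A(n,d)] → K[x₀,…,x_n] sending z_I ↦ x^I is spanned, as a K-vector space, by the binomials z_I z_J − z_K z_L with I,J,K,L ∈ A(n,d) and I+J = K+L. -/

import Mathlib

/-!
The Veronese map sends each monomial `z^m` to a single monomial `x^{E m}`, where `E` is additive
in `m`. So a polynomial `q` lies in its kernel exactly when, for every fibre of `E`, the
coefficients of `q` on that fibre sum to zero. Choosing one representative `r(m)` in each
fibre, `q = ∑ₘ q_m (z^m - z^{r(m)})`. For `q` homogeneous of degree 2 the representatives can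
be taken of degree 2, and a difference of two degree-2 monomials with the same image is a
binomial `z_I z_J - z_L z_M` with `I + J = L + M`.
-/

open MvPolynomial

/-- The index set `A(n,d)` of degree-`d` monomials in `n+1` variables. -/
def Amonos (n d : ℕ) : Type := {v : Fin (n + 1) → ℕ // ∑ i, v i = d}

/-- The `K`-algebra map `K[z_I : I ∈ A(n,d)] → K[x₀,…,x_n]`, `z_I ↦ x^I`. -/
noncomputable def veroneseMap (K : Type*) [Field K] (n d : ℕ) :
    MvPolynomial (Amonos n d) K →ₐ[K] MvPolynomial (Fin (n + 1)) K :=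
  aeval (fun I : Amonos n d => ∏ i, X i ^ I.1 i)

theorem MvPolynomial.mem_span_monomial_sub_monomial_of_mapDomain_eq_zero
    {σ τ R : Type*} [CommRing R] {f : (σ →₀ ℕ) → (τ →₀ ℕ)} {S : Set (σ →₀ ℕ)}
    {p : MvPolynomial σ R} (hp : AddMonoidAlgebra.mapDomain f p = 0) (hS : ↑p.support ⊆ S) :
    p ∈ Submodule.span R
      {q | ∃ a ∈ S, ∃ b ∈ S, f a = f b ∧ q = monomial a 1 - monomial b 1} := by
  set g := Function.invFunOn f S ∘ f
  have hg : AddMonoidAlgebra.mapDomainLinearMap R R g p = 0 := by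
    rw [AddMonoidAlgebra.mapDomainLinearMap_comp, LinearMap.comp_apply]
    exact (congrArg _ hp).trans (map_zero _)
  have hsum : p = ∑ a ∈ p.support, coeff a p • (monomial a 1 - monomial (g a) 1) := by
    conv_lhs => rw [← sub_zero p, ← hg, as_sum p, map_sum]
    simp only [← single_eq_monomial, AddMonoidAlgebra.mapDomainLinearMap_single,
      ← Finset.sum_sub_distrib]
    simp [single_eq_monomial, smul_sub, smul_monomial]
  rw [hsum]
  refine Submodule.sum_mem _ fun a ha => Submodule.smul_mem _ _ (Submodule.subset_span ?_)
  have hfibre : ∃ b ∈ S, f b = f a := ⟨a, hS ha, rfl⟩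
  exact ⟨a, hS ha, g a, Function.invFunOn_mem hfibre, (Function.invFunOn_eq hfibre).symm, rfl⟩

theorem MvPolynomial.support_subset_of_isHomogeneous {σ R : Type*} [CommSemiring R]
    {p : MvPolynomial σ R} {k : ℕ} (hp : p.IsHomogeneous k) :
    ↑p.support ⊆ {m : σ →₀ ℕ | m.degree = k} :=
  fun _ hm => (hp.degree_eq_sum_deg_support hm).symm

theorem MvPolynomial.X_mul_X_eq_monomial {σ R : Type*} [CommSemiring R] (i j : σ) :
    (X i * X j : MvPolynomial σ R) = monomial (Finsupp.single i 1 + Finsupp.single j 1) 1 := by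
  rw [X, X, monomial_mul, one_mul]

theorem Finsupp.exists_eq_single_add_single_of_degree_eq_two {α : Type*} {m : α →₀ ℕ}
    (hm : m.degree = 2) : ∃ a b, m = single a 1 + single b 1 := by
  classical
  have hcard : Multiset.card (toMultiset m) = 2 := by
    rw [card_toMultiset, ← hm, degree_apply]
    rfl
  obtain ⟨a, b, hab⟩ := Multiset.card_eq_two.mp hcard
  refine ⟨a, b, ?_⟩
  rw [← toMultiset_toFinsupp m, hab, Multiset.insert_eq_cons, ← Multiset.singleton_add,
    Multiset.toFinsupp_add, Multiset.toFinsupp_singleton, Multiset.toFinsupp_singleton]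

namespace Amonos

variable {n d : ℕ}

noncomputable def toFinsupp (I : Amonos n d) : Fin (n + 1) →₀ ℕ :=
  Finsupp.equivFunOnFinite.symm I.1

noncomputable def veroneseExponent (n d : ℕ) : (Amonos n d →₀ ℕ) →+ (Fin (n + 1) →₀ ℕ) :=
  (Finsupp.linearCombination ℕ toFinsupp).toAddMonoidHom

theorem veroneseExponent_single_add_single (I J : Amonos n d) :
    veroneseExponent n d (.single I 1 + .single J 1) =
      Finsupp.equivFunOnFinite.symm (I.1 + J.1) := by
  ext i
  simp [veroneseExponent, toFinsupp]

end Amonos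

section

open Amonos

variable {K : Type*} [Field K] {n d : ℕ}

theorem veroneseMap_eq_mapDomainAlgHom :
    veroneseMap K n d = AddMonoidAlgebra.mapDomainAlgHom K K (veroneseExponent n d) := by
  refine MvPolynomial.algHom_ext fun I => ?_
  rw [veroneseMap, aeval_X, AddMonoidAlgebra.mapDomainAlgHom_apply, X, ← single_eq_monomial,
    AddMonoidAlgebra.mapDomain_single]
  simp only [veroneseExponent, LinearMap.toAddMonoidHom_coe, Finsupp.linearCombination_single,
    one_smul, toFinsupp]
  rw [single_eq_monomial, monomial_eq, C_1, one_mul, Finsupp.prod_fintype _ _ fun _ => pow_zero _]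
  rfl

theorem veroneseMap_X_mul_X (I J : Amonos n d) :
    veroneseMap K n d (X I * X J) = monomial (Finsupp.equivFunOnFinite.symm (I.1 + J.1)) 1 := by
  rw [X_mul_X_eq_monomial, veroneseMap_eq_mapDomainAlgHom, AddMonoidAlgebra.mapDomainAlgHom_apply,
    ← single_eq_monomial, AddMonoidAlgebra.mapDomain_single, veroneseExponent_single_add_single,
    single_eq_monomial]

end

theorem stmt_12_general (K : Type*) [Field K] (n d : ℕ) :
    Submodule.span K
        {q : MvPolynomial (Amonos n d) K | veroneseMap K n d q = 0 ∧ q.IsHomogeneous 2}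
      = Submodule.span K
        {q : MvPolynomial (Amonos n d) K |
          ∃ I J L M : Amonos n d, I.1 + J.1 = L.1 + M.1 ∧ q = X I * X J - X L * X M} := by
  refine le_antisymm (Submodule.span_le.mpr ?_) (Submodule.span_le.mpr ?_)
  · rintro q ⟨hker, hhom⟩
    rw [veroneseMap_eq_mapDomainAlgHom, AddMonoidAlgebra.mapDomainAlgHom_apply] at hker
    refine Submodule.span_le.mpr ?_ (mem_span_monomial_sub_monomial_of_mapDomain_eq_zero hker
      (support_subset_of_isHomogeneous hhom))
    rintro _ ⟨a, ha, b, hb, hab, rfl⟩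
    obtain ⟨I, J, rfl⟩ := Finsupp.exists_eq_single_add_single_of_degree_eq_two ha
    obtain ⟨L, M, rfl⟩ := Finsupp.exists_eq_single_add_single_of_degree_eq_two hb
    rw [Amonos.veroneseExponent_single_add_single, Amonos.veroneseExponent_single_add_single] at hab
    exact Submodule.subset_span ⟨I, J, L, M, Finsupp.equivFunOnFinite.symm.injective hab,
      by rw [X_mul_X_eq_monomial, X_mul_X_eq_monomial]⟩
  · rintro _ ⟨I, J, L, M, h, rfl⟩
    refine Submodule.subset_span ⟨?_, ?_⟩
    · rw [map_sub, veroneseMap_X_mul_X, veroneseMap_X_mul_X, h, sub_self]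
    · exact ((isHomogeneous_X K I).mul (isHomogeneous_X K J)).sub
        ((isHomogeneous_X K L).mul (isHomogeneous_X K M))

/-- The degree-2 part of the kernel of `z_I ↦ x^I` is spanned over `K` by the binomials
`z_I z_J − z_K z_L` with `I+J = K+L`. -/
theorem stmt_12 (K : Type*) [Field K] (n d : ℕ) (hn : 1 ≤ n) (hd : 1 ≤ d) :
    Submodule.span K
        {q : MvPolynomial (Amonos n d) K | veroneseMap K n d q = 0 ∧ q.IsHomogeneous 2}
      = Submodule.span K
        {q : MvPolynomial (Amonos n d) K |
          ∃ I J L M : Amonos n d, I.1 + J.1 = L.1 + M.1 ∧ q = X I * X J - X L * X M} :=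
  stmt_12_general K n d
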